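/- arXiv:2506.23908 — 6 statements merged into one kernel-verified Lean document; each statement's English description precedes it below -/
import Mathlib

section
/- Let X be a set, ρ a probability measure on X, n a natural number, and A any learner mapping labeled datasets in (X × {0,1})^n to hypotheses (functions X → {0,1}). Let h and h' be two distinct hypotheses and let A_{h,h'} = {x ∈ X : h(x) = h'(x)} be their agreement set. If X_1,…,X_n are drawn i.i.d. from ρ and D_h denotes the dataset ((X_1,h(X_1)),…,(X_n,h(X_n))) (and similarly D_{h'}), then (ρ(A_{h,h'}))^n ≤ P(A(D_h) ≠ h) + P(A(D_{h'}) ≠ h'). -/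
open MeasureTheory

/-- If two distinct hypotheses `h, h'` agree on a set of `ρ`-measure `q`, then any learner `A`
trained on `n` i.i.d. examples fails to identify `h` or fails to identify `h'` with total
probability at least `q ^ n`. -/
theorem agreement_lower_bounds_failure
    {X : Type*} [MeasurableSpace X] (ρ : Measure X) [IsProbabilityMeasure ρ]
    (n : ℕ) (A : (Fin n → X × Bool) → (X → Bool))
    (h h' : X → Bool) (hne : h ≠ h') :
    (ρ {x | h x = h' x}) ^ n ≤
      (Measure.pi fun _ : Fin n => ρ) {ω | A (fun i => (ω i, h (ω i))) ≠ h} +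
      (Measure.pi fun _ : Fin n => ρ) {ω | A (fun i => (ω i, h' (ω i))) ≠ h'} := by
  have key : Set.pi Set.univ (fun _ : Fin n => {x | h x = h' x}) ⊆
      {ω : Fin n → X | A (fun i => (ω i, h (ω i))) ≠ h} ∪
      {ω | A (fun i => (ω i, h' (ω i))) ≠ h'} := by
    intro ω hω
    have heq : (fun i => (ω i, h (ω i))) = fun i => (ω i, h' (ω i)) := by
      funext i
      have := hω i (Set.mem_univ i)
      simp only [Set.mem_setOf_eq] at this
      simp [this]
    by_contra hc
    simp only [Set.mem_union, Set.mem_setOf_eq, not_or, not_not] at hc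
    exact hne (hc.1 ▸ heq ▸ hc.2)
  calc (ρ {x | h x = h' x}) ^ n
      = ∏ _i : Fin n, ρ {x | h x = h' x} := by
        simp [Finset.prod_const]
    _ = (Measure.pi fun _ : Fin n => ρ)
          (Set.pi Set.univ (fun _ : Fin n => {x | h x = h' x})) := by
        rw [Measure.pi_pi]
    _ ≤ (Measure.pi fun _ : Fin n => ρ)
          ({ω : Fin n → X | A (fun i => (ω i, h (ω i))) ≠ h} ∪
           {ω | A (fun i => (ω i, h' (ω i))) ≠ h'}) := measure_mono key
    _ ≤ _ := measure_union_le _ _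
end

section
/- (All learners fail on some task for small samples.) Let X be a set, ρ a probability measure on X, and H a set of at least two hypotheses (functions X → {0,1}). Let p = inf over pairs of distinct h, h' ∈ H of P(h(X) ≠ h'(X)) where X ~ ρ, and assume p > 0. Then for any natural number n with n ≤ 1/(2p) and any learner A mapping labeled datasets in (X × {0,1})^n to hypotheses, there exists h* ∈ H such that, when X_1,…,X_n are drawn i.i.d. from ρ and D_{h*} = ((X_1,h*(X_1)),…,(X_n,h*(X_n))), the probability that A(D_{h*}) ≠ h* is at least 1/4. -/
/-!
If the learner succeeds on two hypotheses for the same sample, they must differ at some sample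
point, since the learner sees the same data otherwise.

When `H` is finite the infimum `p` is attained by a pair `h ≠ h'`, and `n ≤ 1/(2p)` means that
with probability at least `1/2` no sample point lands where they differ; the learner then fails on
`h` or on `h'`, so the two failure probabilities add up to at least `1/2`.

When `H` is infinite the infimum need not be attained, and we use `2^(n+1)` hypotheses instead:
for a fixed sample the learner succeeds on at most `2^n` of them (one per labelling of the
sample), so on average it fails with probability at least `1/2`.
-/

open MeasureTheory ENNReal

theorem ENNReal.mul_le_half_of_le_one_div_two_mul {a b : ℝ≥0∞} (h : a ≤ 1 / (2 * b)) :
    a * b ≤ 1 / 2 := by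
  rw [ENNReal.le_div_iff_mul_le (Or.inr one_ne_zero) (Or.inr one_ne_top)] at h ⊢
  calc a * b * 2 = a * (2 * b) := by ring
    _ ≤ 1 := h

theorem Set.Finite.exists_ne_le_iInf_ne {α β : Type*} [CompleteLinearOrder β] {s : Set α}
    (hs : s.Finite) (hne : ∃ a ∈ s, ∃ b ∈ s, a ≠ b) (d : α → α → β) :
    ∃ a ∈ s, ∃ b ∈ s, a ≠ b ∧ d a b ≤ ⨅ a ∈ s, ⨅ b ∈ s, ⨅ _ : a ≠ b, d a b := by
  obtain ⟨a, ha, b, hb, hab⟩ := hne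
  obtain ⟨q, ⟨hq₁, hq₂, hq⟩, hmin⟩ :=
    Set.exists_min_image {q : α × α | q.1 ∈ s ∧ q.2 ∈ s ∧ q.1 ≠ q.2} (fun q => d q.1 q.2)
      ((hs.prod hs).subset fun q hq => ⟨hq.1, hq.2.1⟩) ⟨(a, b), ha, hb, hab⟩
  exact ⟨q.1, hq₁, q.2, hq₂, hq, le_iInf₂ fun a ha => le_iInf₂ fun b hb => le_iInf fun hab =>
    hmin (a, b) ⟨ha, hb, hab⟩⟩

theorem MeasureTheory.Measure.pi_eval_preimage {ι : Type*} [Fintype ι] [DecidableEq ι]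
    {α : ι → Type*} [∀ i, MeasurableSpace (α i)] (μ : ∀ i, Measure (α i))
    [∀ i, IsProbabilityMeasure (μ i)] (i : ι) (s : Set (α i)) :
    Measure.pi μ (Function.eval i ⁻¹' s) = μ i s := by
  rw [Set.eval_preimage, Measure.pi_pi, Fintype.prod_eq_single i fun j hj => by
    simp [Function.update_of_ne hj]]
  simp

open Finset Classical in
theorem MeasureTheory.sum_measure_le_mul_measure_univ_of_card_le {α ι : Type*}
    [MeasurableSpace α] (μ : Measure α) (s : Finset ι) {t : ι → Set α}
    (ht : ∀ i ∈ s, MeasurableSet (t i)) {m : ℕ} (hm : ∀ x, #{i ∈ s | x ∈ t i} ≤ m) :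
    ∑ i ∈ s, μ (t i) ≤ m * μ Set.univ := by
  calc ∑ i ∈ s, μ (t i) = ∫⁻ x, ∑ i ∈ s, (t i).indicator 1 x ∂μ := by
        rw [lintegral_finsetSum s fun i hi => measurable_one.indicator (ht i hi)]
        exact sum_congr rfl fun i hi => (lintegral_indicator_one (ht i hi)).symm
    _ ≤ ∫⁻ _, (m : ℝ≥0∞) ∂μ := by
        refine lintegral_mono fun x => ?_
        simp only [Set.indicator_apply, Pi.one_apply, sum_boole]
        exact_mod_cast hm x
    _ = m * μ Set.univ := lintegral_const _

section Learner

variable {X : Type*} {n : ℕ}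

def failureSet (A : (Fin n → X × Bool) → (X → Bool)) (h : X → Bool) : Set (Fin n → X) :=
  {ω | A (fun i => (ω i, h (ω i))) ≠ h}

theorem eq_of_notMem_failureSet {A : (Fin n → X × Bool) → (X → Bool)} {h h' : X → Bool}
    {ω : Fin n → X} (hω : ω ∉ failureSet A h) (hω' : ω ∉ failureSet A h')
    (hagree : ∀ i, h (ω i) = h' (ω i)) : h = h' := by
  simp only [failureSet, Set.mem_ofPred_eq, not_not] at hω hω'
  rw [← hω, ← hω']
  simp_rw [hagree]

open Finset Classical in
theorem card_filter_notMem_failureSet_le (A : (Fin n → X × Bool) → (X → Bool))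
    (t : Finset (X → Bool)) (ω : Fin n → X) :
    #{g ∈ t | ω ∉ failureSet A g} ≤ 2 ^ n := by
  calc #{g ∈ t | ω ∉ failureSet A g} ≤ #(univ : Finset (Fin n → Bool)) :=
        card_le_card_of_injOn (fun g i => g (ω i)) (fun _ _ => mem_univ _)
          fun g hg g' hg' hgg' => eq_of_notMem_failureSet (mem_filter.mp hg).2
            (mem_filter.mp hg').2 (congrFun hgg')
    _ = 2 ^ n := by simp

variable [MeasurableSpace X]

theorem sum_one_sub_measure_failureSet_le (μ : Measure (Fin n → X)) [IsProbabilityMeasure μ]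
    (A : (Fin n → X × Bool) → (X → Bool)) (t : Finset (X → Bool)) :
    ∑ g ∈ t, (1 - μ (failureSet A g)) ≤ 2 ^ n := by
  -- Failure sets need not be measurable; pass to the complements of their measurable hulls.
  have hsucc : ∀ g, 1 - μ (failureSet A g) = μ (toMeasurable μ (failureSet A g))ᶜ := fun g => by
    rw [measure_compl (measurableSet_toMeasurable _ _) (measure_ne_top _ _),
      measure_toMeasurable, measure_univ]
  calc ∑ g ∈ t, (1 - μ (failureSet A g)) = ∑ g ∈ t, μ (toMeasurable μ (failureSet A g))ᶜ :=
        Finset.sum_congr rfl fun g _ => hsucc g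
    _ ≤ (2 ^ n : ℕ) * μ Set.univ := by
        refine sum_measure_le_mul_measure_univ_of_card_le μ t
          (fun g _ => (measurableSet_toMeasurable _ _).compl) fun ω => ?_
        refine (Finset.card_le_card fun g => ?_).trans (card_filter_notMem_failureSet_le A t ω)
        simp only [Finset.mem_filter]
        exact fun ⟨hg, hK⟩ => ⟨hg, fun hfail => hK (subset_toMeasurable μ _ hfail)⟩
    _ = 2 ^ n := by simp

theorem exists_half_le_measure_failureSet (μ : Measure (Fin n → X)) [IsProbabilityMeasure μ]
    (A : (Fin n → X × Bool) → (X → Bool)) {t : Finset (X → Bool)} (ht : 2 ^ (n + 1) ≤ t.card) :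
    ∃ g ∈ t, 1 / 2 ≤ μ (failureSet A g) := by
  have htne : t.Nonempty := Finset.card_pos.mp ((Nat.two_pow_pos _).trans_le ht)
  have hsum : ∑ g ∈ t, (1 - μ (failureSet A g)) ≤ ∑ _g ∈ t, 1 / 2 :=
    calc ∑ g ∈ t, (1 - μ (failureSet A g)) ≤ 2 ^ n := sum_one_sub_measure_failureSet_le μ A t
      _ = (2 ^ (n + 1) : ℕ) * (1 / 2) := by
        push_cast
        rw [pow_succ, mul_assoc, one_div, ENNReal.mul_inv_cancel two_ne_zero ofNat_ne_top, mul_one]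
      _ ≤ t.card * (1 / 2) := by gcongr
      _ = ∑ _g ∈ t, 1 / 2 := by simp
  obtain ⟨g, hg, hle⟩ := ENNReal.exists_le_of_sum_le htne hsum
  refine ⟨g, hg, ?_⟩
  rw [tsub_le_iff_right] at hle
  simpa [ENNReal.one_sub_inv_two] using tsub_le_iff_left.mpr hle

theorem one_le_measure_failureSet_add_add (ρ : Measure X) [IsProbabilityMeasure ρ]
    (A : (Fin n → X × Bool) → (X → Bool)) {h h' : X → Bool} (hne : h ≠ h') :
    1 ≤ (Measure.pi fun _ : Fin n => ρ) (failureSet A h) +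
      (Measure.pi fun _ : Fin n => ρ) (failureSet A h') + n * ρ {x | h x ≠ h' x} := by
  set μ := Measure.pi fun _ : Fin n => ρ
  have hcover : Set.univ ⊆ failureSet A h ∪ failureSet A h' ∪
      ⋃ i, Function.eval i ⁻¹' {x | h x ≠ h' x} := by
    intro ω _
    by_contra hω
    simp only [Set.mem_union, Set.mem_iUnion, Set.mem_preimage, Function.eval,
      Set.mem_ofPred_eq, not_or, not_exists, not_not] at hω
    exact hne (eq_of_notMem_failureSet hω.1.1 hω.1.2 hω.2)
  calc 1 = μ Set.univ := measure_univ.symm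
    _ ≤ μ (failureSet A h) + μ (failureSet A h') +
        ∑ i, μ (Function.eval i ⁻¹' {x | h x ≠ h' x}) := by
      refine (measure_mono hcover).trans ((measure_union_le _ _).trans ?_)
      gcongr
      exacts [measure_union_le _ _, measure_iUnion_fintype_le _ _]
    _ = μ (failureSet A h) + μ (failureSet A h') + n * ρ {x | h x ≠ h' x} := by
      simp only [μ, Measure.pi_eval_preimage, Finset.sum_const, Finset.card_univ,
        Fintype.card_fin, nsmul_eq_mul]

theorem quarter_le_measure_failureSet_or_of_mul_le_half (ρ : Measure X) [IsProbabilityMeasure ρ]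
    (A : (Fin n → X × Bool) → (X → Bool)) {h h' : X → Bool} (hne : h ≠ h')
    (hd : n * ρ {x | h x ≠ h' x} ≤ 1 / 2) :
    1 / 4 ≤ (Measure.pi fun _ : Fin n => ρ) (failureSet A h) ∨
      1 / 4 ≤ (Measure.pi fun _ : Fin n => ρ) (failureSet A h') := by
  by_contra! hlt
  refine (one_le_measure_failureSet_add_add ρ A hne).not_gt ?_
  calc _ < 1 / 4 + 1 / 4 + 1 / 2 :=
        ENNReal.add_lt_add_of_lt_of_le (hd.trans_lt (by norm_num)).ne
          (ENNReal.add_lt_add hlt.1 hlt.2) hd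
    _ = 1 := by
      rw [← ENNReal.toReal_eq_one_iff]
      simp [ENNReal.toReal_add]
      norm_num

end Learner

theorem all_learners_fail_on_some_task_general
    {X : Type*} [MeasurableSpace X] (ρ : Measure X) [IsProbabilityMeasure ρ]
    (H : Set (X → Bool)) (hH : ∃ h ∈ H, ∃ h' ∈ H, h ≠ h')
    (p : ℝ≥0∞)
    (hp : p = ⨅ (h : X → Bool) (_ : h ∈ H) (h' : X → Bool) (_ : h' ∈ H) (_ : h ≠ h'),
            ρ {x | h x ≠ h' x})
    (n : ℕ) (hn : (n : ℝ≥0∞) ≤ 1 / (2 * p))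
    (A : (Fin n → X × Bool) → (X → Bool)) :
    ∃ h ∈ H,
      (Measure.pi fun _ : Fin n => ρ) {ω | A (fun i => (ω i, h (ω i))) ≠ h} ≥ 1 / 4 := by
  rcases H.finite_or_infinite with hfin | hinf
  · obtain ⟨h, hh, h', hh', hne, hmin⟩ :=
      hfin.exists_ne_le_iInf_ne hH fun h h' => ρ {x | h x ≠ h' x}
    have hd : n * ρ {x | h x ≠ h' x} ≤ 1 / 2 :=
      (mul_le_mul_right (hp ▸ hmin) _).trans (ENNReal.mul_le_half_of_le_one_div_two_mul hn)
    rcases quarter_le_measure_failureSet_or_of_mul_le_half ρ A hne hd with hfail | hfail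
    exacts [⟨h, hh, hfail⟩, ⟨h', hh', hfail⟩]
  · obtain ⟨t, htH, htcard⟩ := hinf.exists_subset_card_eq (2 ^ (n + 1))
    obtain ⟨g, hg, hfail⟩ := exists_half_le_measure_failureSet (Measure.pi fun _ : Fin n => ρ) A
      htcard.ge
    exact ⟨g, htH hg, le_trans (by norm_num) hfail⟩

/-- All learners fail on some task for small samples: if `p` is the infimum disagreement
probability over pairs of distinct hypotheses in `H` (with `p > 0`), then for any sample size
`n ≤ 1/(2p)` and any learner `A`, there is a labeling hypothesis `h ∈ H` on which `A` fails to
identify `h` with probability at least `1/4`. -/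
theorem all_learners_fail_on_some_task
    {X : Type*} [MeasurableSpace X] (ρ : Measure X) [IsProbabilityMeasure ρ]
    (H : Set (X → Bool)) (hH : ∃ h ∈ H, ∃ h' ∈ H, h ≠ h')
    (p : ℝ≥0∞)
    (hp : p = ⨅ (h : X → Bool) (_ : h ∈ H) (h' : X → Bool) (_ : h' ∈ H) (_ : h ≠ h'),
            ρ {x | h x ≠ h' x})
    (hp0 : 0 < p)
    (n : ℕ) (hn : (n : ℝ≥0∞) ≤ 1 / (2 * p))
    (A : (Fin n → X × Bool) → (X → Bool)) :
    ∃ h ∈ H,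
      (Measure.pi fun _ : Fin n => ρ) {ω | A (fun i => (ω i, h (ω i))) ≠ h} ≥ 1 / 4 :=
  all_learners_fail_on_some_task_general ρ H hH p hp n hn A
end

section
/- Let X = {0,1}^d and let f*_1(x) = 1 if x is the all-zeros vector and 0 otherwise, and f*_0(x) = 0 for all x. Let ρ be the uniform distribution on X and let n ≤ 2^{d−1}. Then for any learner A mapping labeled datasets in (X × {0,1})^n to hypotheses, there exists h* ∈ {f*_0, f*_1} such that, when X_1,…,X_n are drawn i.i.d. from ρ and D_{h*} = ((X_1,h*(X_1)),…,(X_n,h*(X_n))), the probability that A(D_{h*}) ≠ h* is at least 1/4. -/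
open MeasureTheory ENNReal

/-!
If no sample point is the all-zeros vector, the datasets labelled by `f*_0` and `f*_1` coincide,
so the learner is wrong for at least one of the two targets. By the union bound, this event has
probability at least `1 - n 2^{-d} ≥ 1/2`, so the two failure probabilities sum to at least `1/2`.
-/

lemma measure_pi_exists_mem_le {ι α : Type*} [Fintype ι] [MeasurableSpace α]
    (ρ : Measure α) [IsProbabilityMeasure ρ] {s : Set α} (hs : MeasurableSet s) :
    Measure.pi (fun _ : ι => ρ) {ω | ∃ i, ω i ∈ s} ≤ Fintype.card ι * ρ s := by
  have hunion : {ω : ι → α | ∃ i, ω i ∈ s} = ⋃ i, Function.eval i ⁻¹' s := by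
    ext; simp
  calc Measure.pi (fun _ : ι => ρ) {ω | ∃ i, ω i ∈ s}
      ≤ ∑ i, Measure.pi (fun _ : ι => ρ) (Function.eval i ⁻¹' s) :=
        hunion ▸ measure_iUnion_fintype_le _ _
    _ = Fintype.card ι * ρ s := by
        simp [(measurePreserving_eval (fun _ : ι => ρ) _).measure_preimage hs.nullMeasurableSet]

lemma one_sub_card_mul_le_measure_pi_forall_notMem {ι α : Type*} [Fintype ι] [MeasurableSpace α]
    (ρ : Measure α) [IsProbabilityMeasure ρ] {s : Set α} (hs : MeasurableSet s) :
    1 - Fintype.card ι * ρ s ≤ Measure.pi (fun _ : ι => ρ) {ω | ∀ i, ω i ∉ s} := by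
  have hcompl : {ω : ι → α | ∀ i, ω i ∉ s} = {ω | ∃ i, ω i ∈ s}ᶜ := by
    ext; simp
  have hmeas : MeasurableSet {ω : ι → α | ∃ i, ω i ∈ s} := by
    simp only [Set.ofPred_exists]
    exact MeasurableSet.iUnion fun i => measurable_pi_apply i hs
  rw [hcompl, prob_compl_eq_one_sub hmeas]
  exact tsub_le_tsub_left (measure_pi_exists_mem_le ρ hs) 1

lemma measure_eq_le_measure_ne_add_measure_ne {Ω D H : Type*} [MeasurableSpace Ω]
    (μ : Measure Ω) (A : D → H) (D₀ D₁ : Ω → D) {h₀ h₁ : H} (hne : h₀ ≠ h₁) :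
    μ {ω | D₀ ω = D₁ ω} ≤ μ {ω | A (D₀ ω) ≠ h₀} + μ {ω | A (D₁ ω) ≠ h₁} := by
  refine (measure_mono fun ω (hω : D₀ ω = D₁ ω) => ?_).trans (measure_union_le _ _)
  by_cases hA : A (D₀ ω) = h₀
  · exact Or.inr (by simpa [← hω, hA] using hne)
  · exact Or.inl hA

lemma ENNReal.half_le_or_half_le_of_le_add {a b c : ℝ≥0∞} (h : c ≤ a + b) :
    c / 2 ≤ a ∨ c / 2 ≤ b := by
  by_contra! hlt
  exact (h.trans_lt (ENNReal.add_lt_add hlt.1 hlt.2)).ne (ENNReal.add_halves c).symm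

lemma natCast_mul_inv_two_pow_le {n d : ℕ} (hd : 1 ≤ d) (hn : n ≤ 2 ^ (d - 1)) :
    (n : ℝ≥0∞) * (2 ^ d)⁻¹ ≤ 2⁻¹ := by
  have hsplit : (2 : ℝ≥0∞) ^ d = 2 ^ (d - 1) * 2 := by
    rw [← pow_succ, Nat.sub_add_cancel hd]
  rw [hsplit, ENNReal.mul_inv (by simp) (by simp), ← mul_assoc]
  calc (n : ℝ≥0∞) * (2 ^ (d - 1))⁻¹ * 2⁻¹ ≤ 1 * 2⁻¹ := by
        gcongr
        rw [ENNReal.mul_inv_le_iff (by simp) (by simp), one_mul]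
        exact_mod_cast hn
    _ = 2⁻¹ := one_mul _

/-- On `X = {0,1}^d` with the uniform distribution, with `f*_1` the indicator of the all-zeros
vector and `f*_0` identically zero, any learner trained on `n ≤ 2^(d-1)` i.i.d. uniform examples
fails with probability at least `1/4` on one of the two target hypotheses. -/
theorem all_learners_fail_indicator_of_zero
    (d : ℕ) (hd : 1 ≤ d)
    (n : ℕ) (hn : n ≤ 2 ^ (d - 1))
    (A : (Fin n → (Fin d → Bool) × Bool) → ((Fin d → Bool) → Bool)) :
    let ρ : Measure (Fin d → Bool) := (PMF.uniformOfFintype (Fin d → Bool)).toMeasure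
    let f0 : (Fin d → Bool) → Bool := fun _ => false
    let f1 : (Fin d → Bool) → Bool := fun x => decide (x = fun _ => false)
    ∃ h, (h = f0 ∨ h = f1) ∧
      (Measure.pi fun _ : Fin n => ρ) {ω | A (fun i => (ω i, h (ω i))) ≠ h} ≥ 1 / 4 := by
  intro ρ f0 f1
  set z : Fin d → Bool := fun _ => false
  have hne : f0 ≠ f1 := fun h => by simpa [f0, f1, z] using congrFun h z
  have hρz : ρ {z} = (2 ^ d)⁻¹ := by simp [ρ]
  have hmiss : 2⁻¹ ≤ Measure.pi (fun _ : Fin n => ρ) {ω | ∀ i, ω i ∉ ({z} : Set _)} := by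
    calc (2⁻¹ : ℝ≥0∞) = 1 - 2⁻¹ := ENNReal.one_sub_inv_two.symm
      _ ≤ 1 - n * ρ {z} := by
          gcongr
          simpa [hρz] using natCast_mul_inv_two_pow_le hd hn
      _ ≤ _ := by
          simpa using one_sub_card_mul_le_measure_pi_forall_notMem (ι := Fin n) ρ
            (measurableSet_singleton z)
  have hagree : {ω : Fin n → Fin d → Bool | ∀ i, ω i ∉ ({z} : Set _)} ⊆
      {ω | (fun i => (ω i, f0 (ω i))) = fun i => (ω i, f1 (ω i))} := by
    intro ω hω
    funext i
    simpa [f0, f1] using hω i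
  have hsum := (hmiss.trans (measure_mono hagree)).trans
    (measure_eq_le_measure_ne_add_measure_ne _ A _ _ hne)
  have hquarter : (2⁻¹ : ℝ≥0∞) / 2 = 1 / 4 := by
    rw [ENNReal.div_eq_inv_mul, ← ENNReal.mul_inv (by simp) (by simp)]
    norm_num
  rcases ENNReal.half_le_or_half_le_of_le_add hsum with h | h
  · exact ⟨f0, Or.inl rfl, hquarter ▸ h⟩
  · exact ⟨f1, Or.inr rfl, hquarter ▸ h⟩
end

section
/- Let X = {0,1}^{2m}, let ρ be the uniform distribution on X, and let n ≤ 2^{m−1}. Then for any learner A mapping labeled datasets in (X × {0,1})^n to hypotheses, there exists h* ∈ {h≥, h>} such that, when X_1,…,X_n are drawn i.i.d. from ρ and D_{h*} = ((X_1,h*(X_1)),…,(X_n,h*(X_n))), the probability that A(D_{h*}) ≠ h* is at least 1/4. -/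
open MeasureTheory ENNReal

/-- `LEFT(x) = Σ_{i<m} x_i 2^i` for `x ∈ {0,1}^{2m}`. -/
def LEFT (m : ℕ) (x : Fin (2 * m) → Bool) : ℕ :=
  ∑ i : Fin m, if x ⟨i.val, by have := i.isLt; omega⟩ then 2 ^ i.val else 0

/-- `RIGHT(x) = Σ_{i<m} x_{m+i} 2^i` for `x ∈ {0,1}^{2m}`. -/
def RIGHT (m : ℕ) (x : Fin (2 * m) → Bool) : ℕ :=
  ∑ i : Fin m, if x ⟨m + i.val, by have := i.isLt; omega⟩ then 2 ^ i.val else 0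

/-- `h≥(x) = 1` iff `LEFT(x) ≥ RIGHT(x)`. -/
def hGe (m : ℕ) (x : Fin (2 * m) → Bool) : Bool := decide (RIGHT m x ≤ LEFT m x)

/-- `h>(x) = 1` iff `LEFT(x) > RIGHT(x)`. -/
def hGt (m : ℕ) (x : Fin (2 * m) → Bool) : Bool := decide (RIGHT m x < LEFT m x)

/-- Binary value of a bit string. -/
def bitsum (m : ℕ) (b : Fin m → Bool) : ℕ :=
  ∑ i : Fin m, if b i then 2 ^ i.val else 0

lemma bitsum_inj (m : ℕ) : Function.Injective (bitsum m) := by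
  intro b c h
  have key : ∀ d : Fin m → Bool,
      bitsum m d = ((finFunctionFinEquiv (fun i => if d i then (1 : Fin 2) else 0)) : ℕ) := by
    intro d
    rw [finFunctionFinEquiv_apply, bitsum]
    refine Finset.sum_congr rfl fun i _ => ?_
    by_cases hd : d i <;> simp [hd]
  rw [key b, key c] at h
  have h2 := finFunctionFinEquiv.injective (Fin.val_injective h)
  funext i
  have hi := congrFun h2 i
  by_cases hb : b i <;> by_cases hc : c i <;> simp_all

lemma LEFT_eq (m : ℕ) (x : Fin (2 * m) → Bool) :
    LEFT m x = bitsum m (fun i => x ⟨i.val, by have := i.isLt; omega⟩) := rfl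

lemma RIGHT_eq (m : ℕ) (x : Fin (2 * m) → Bool) :
    RIGHT m x = bitsum m (fun i => x ⟨m + i.val, by have := i.isLt; omega⟩) := rfl

lemma tie_iff (m : ℕ) (x : Fin (2 * m) → Bool) :
    RIGHT m x = LEFT m x ↔
      ∀ i : Fin m, x ⟨m + i.val, by have := i.isLt; omega⟩ = x ⟨i.val, by have := i.isLt; omega⟩ := by
  rw [LEFT_eq, RIGHT_eq]
  constructor
  · intro h i
    exact congrFun (bitsum_inj m h) i
  · intro h
    congr 1
    funext i
    exact h i

/-- The tie set has exactly `2^m` elements. -/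
noncomputable def tieEquiv (m : ℕ) :
    {x : Fin (2 * m) → Bool // RIGHT m x = LEFT m x} ≃ (Fin m → Bool) where
  toFun x := fun i => x.1 ⟨i.val, by have := i.isLt; omega⟩
  invFun b := ⟨fun j => if h : j.val < m then b ⟨j.val, h⟩
      else b ⟨j.val - m, by have := j.isLt; omega⟩, by
    rw [tie_iff]
    intro i
    have h1 : ¬ (m + i.val < m) := by omega
    have h2 : i.val < m := i.isLt
    simp only [h1, dif_neg, not_false_iff, h2, dif_pos, Nat.add_sub_cancel_left]⟩
  left_inv := by
    rintro ⟨x, hx⟩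
    rw [tie_iff] at hx
    ext j
    by_cases hj : j.val < m
    · simp only [hj, dif_pos]
    · simp only [hj, dif_neg, not_false_iff]
      have hjm : j.val - m < m := by have := j.isLt; omega
      have := hx ⟨j.val - m, hjm⟩
      simp only at this
      have hidx : (⟨m + (j.val - m), by omega⟩ : Fin (2 * m)) = j := by
        apply Fin.ext
        show m + (j.val - m) = j.val
        omega
      rw [hidx] at this
      exact this.symm
  right_inv := by
    intro b
    funext i
    simp only [i.isLt, dif_pos]

lemma card_tie (m : ℕ) :
    Fintype.card {x : Fin (2 * m) → Bool // RIGHT m x = LEFT m x} = 2 ^ m := by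
  rw [Fintype.card_congr (tieEquiv m)]
  simp

lemma hGe_ne_hGt (m : ℕ) : hGe m ≠ hGt m := by
  intro h
  have := congrFun h (fun _ => false)
  have hL : LEFT m (fun _ => false) = 0 := by simp [LEFT]
  have hR : RIGHT m (fun _ => false) = 0 := by simp [RIGHT]
  simp [hGe, hGt, hL, hR] at this

lemma hGe_eq_hGt_of_ne (m : ℕ) (x : Fin (2 * m) → Bool) (h : RIGHT m x ≠ LEFT m x) :
    hGe m x = hGt m x := by
  simp only [hGe, hGt, decide_eq_decide]
  omega

/-- On `X = {0,1}^{2m}` with the uniform distribution, any learner trained on `n ≤ 2^(m-1)`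
i.i.d. uniform examples fails with probability at least `1/4` either on `h≥` or on `h>`. -/
theorem all_learners_fail_hGe_or_hGt
    (m : ℕ) (hm : 1 ≤ m)
    (n : ℕ) (hn : n ≤ 2 ^ (m - 1))
    (A : (Fin n → (Fin (2 * m) → Bool) × Bool) → ((Fin (2 * m) → Bool) → Bool)) :
    let ρ : Measure (Fin (2 * m) → Bool) :=
      (PMF.uniformOfFintype (Fin (2 * m) → Bool)).toMeasure
    ∃ h, (h = hGe m ∨ h = hGt m) ∧
      (Measure.pi fun _ : Fin n => ρ) {ω | A (fun i => (ω i, h (ω i))) ≠ h} ≥ 1 / 4 := by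
  intro ρ
  set μ : Measure (Fin n → (Fin (2 * m) → Bool)) := Measure.pi fun _ : Fin n => ρ with hμ
  have : IsProbabilityMeasure ρ := PMF.toMeasure.isProbabilityMeasure _
  have : IsProbabilityMeasure μ := by rw [hμ]; infer_instance
  -- the tie set and its measure
  set T : Set (Fin (2 * m) → Bool) := {x | RIGHT m x = LEFT m x} with hT
  have hρT : ρ T = (2 : ℝ≥0∞) ^ m / (2 : ℝ≥0∞) ^ (2 * m) := by
    rw [PMF.toMeasure_uniformOfFintype_apply T .of_discrete]
    rw [show Fintype.card (Fin (2 * m) → Bool) = 2 ^ (2 * m) by simp]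
    simp only [← Nat.card_eq_fintype_card]
    rw [Nat.card_congr ((Equiv.subtypeEquivRight (fun x => Iff.rfl)) :
      ↥T ≃ {x : Fin (2 * m) → Bool // RIGHT m x = LEFT m x})]
    rw [Nat.card_eq_fintype_card, card_tie]
    push_cast
    rfl
  -- measure of a single-coordinate tie event
  have heval : ∀ i : Fin n,
      μ {ω : Fin n → Fin (2 * m) → Bool | RIGHT m (ω i) = LEFT m (ω i)} = ρ T := by
    intro i
    have hpre : {ω : Fin n → Fin (2 * m) → Bool | RIGHT m (ω i) = LEFT m (ω i)}
        = Function.eval i ⁻¹' T := rfl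
    rw [hpre, Set.eval_preimage, hμ, Measure.pi_pi]
    rw [Fintype.prod_eq_single i (fun j hj => by
      rw [Function.update_of_ne hj]; exact measure_univ)]
    rw [Function.update_self]
  -- the bad event: some sample is a tie
  set bad : Set (Fin n → Fin (2 * m) → Bool) :=
    {ω | ∃ i, RIGHT m (ω i) = LEFT m (ω i)} with hbad
  have hbadle : μ bad ≤ 1 / 2 := by
    have h1 : bad = ⋃ i : Fin n, {ω | RIGHT m (ω i) = LEFT m (ω i)} := by
      ext ω; simp [hbad]
    rw [h1]
    refine le_trans (measure_iUnion_le _) ?_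
    have ha0 : ((2 : ℝ≥0∞) ^ (m - 1 + m)) ≠ 0 := by
      exact pow_ne_zero _ (by norm_num)
    have hat : ((2 : ℝ≥0∞) ^ (m - 1 + m)) ≠ ⊤ := ENNReal.pow_ne_top (by norm_num)
    calc ∑' i : Fin n, μ {ω | RIGHT m (ω i) = LEFT m (ω i)}
        = ∑ i : Fin n, ρ T := by
          rw [tsum_fintype]; exact Finset.sum_congr rfl fun i _ => heval i
      _ = (n : ℝ≥0∞) * ρ T := by simp [Finset.sum_const, nsmul_eq_mul]
      _ ≤ ((2 ^ (m - 1) : ℕ) : ℝ≥0∞) * ρ T := by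
          exact mul_le_mul_left (by exact_mod_cast hn) _
      _ = 1 / 2 := by
          rw [hρT]
          push_cast
          rw [div_eq_mul_inv, ← mul_assoc, ← pow_add,
            show 2 * m = (m - 1 + m) + 1 by omega, pow_succ,
            ENNReal.mul_inv (Or.inl ha0) (Or.inl hat), ← mul_assoc,
            ENNReal.mul_inv_cancel ha0 hat, one_mul, one_div]
  -- failure events
  set FGe : Set (Fin n → Fin (2 * m) → Bool) :=
    {ω | A (fun i => (ω i, hGe m (ω i))) ≠ hGe m} with hFGe
  set FGt : Set (Fin n → Fin (2 * m) → Bool) :=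
    {ω | A (fun i => (ω i, hGt m (ω i))) ≠ hGt m} with hFGt
  have hsub : badᶜ ⊆ FGe ∪ FGt := by
    intro ω hω
    simp only [Set.mem_compl_iff, hbad, Set.mem_setOf_eq, not_exists] at hω
    have hdata : (fun i => (ω i, hGe m (ω i))) = (fun i => (ω i, hGt m (ω i))) := by
      funext i
      rw [hGe_eq_hGt_of_ne m (ω i) (hω i)]
    by_cases hA : A (fun i => (ω i, hGe m (ω i))) = hGe m
    · right
      show A (fun i => (ω i, hGt m (ω i))) ≠ hGt m
      rw [← hdata, hA]
      exact hGe_ne_hGt m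
    · left; exact hA
  by_contra hcon
  push_neg at hcon
  have hge := hcon (hGe m) (Or.inl rfl)
  have hgt := hcon (hGt m) (Or.inr rfl)
  have hlt : (1 : ℝ≥0∞) < 1 := by
    calc (1 : ℝ≥0∞) = μ bad + μ badᶜ := by
          rw [measure_add_measure_compl (MeasurableSet.of_discrete), measure_univ]
      _ ≤ 1 / 2 + (μ FGe + μ FGt) :=
          add_le_add hbadle ((measure_mono hsub).trans (measure_union_le _ _))
      _ < 1 / 2 + (1 / 4 + 1 / 4) :=
          ENNReal.add_lt_add_left (by norm_num) (ENNReal.add_lt_add hge hgt)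
      _ = 1 := by
          have h4 : (1 : ℝ≥0∞) / 4 + 1 / 4 = 2⁻¹ := by
            simp only [one_div]
            rw [← two_mul, show (4 : ℝ≥0∞) = 2 * 2 by norm_num,
              ENNReal.mul_inv (by norm_num) (by norm_num), ← mul_assoc,
              ENNReal.mul_inv_cancel (by norm_num) (by norm_num), one_mul]
          rw [h4, one_div, ENNReal.inv_two_add_inv_two]
  exact absurd hlt (lt_irrefl 1)
end

section
/- Let X = {0,1}^{2m}, let σ : X → X swap the left and right halves of its input, and let ρ be the uniform distribution on X (which is σ-invariant). Let A be a learner with variable-and-label symmetry with respect to σ, meaning that for every labeled dataset ((x_1,y_1),…,(x_n,y_n)) and every x ∈ X one has A((σx_1, 1−y_1),…,(σx_n, 1−y_n))(x) = 1 − A((x_1,y_1),…,(x_n,y_n))(σx). If n ≤ 2^{m−1}, then, when X_1,…,X_n are drawn i.i.d. from ρ and D = ((X_1,h≥(X_1)),…,(X_n,h≥(X_n))), the probability that A(D) ≠ h≥ is at least 1/4. -/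
open MeasureTheory ENNReal

/-- The involution `σ` on `{0,1}^{2m}` swapping the left and right halves. -/
def swapHalves (m : ℕ) (x : Fin (2 * m) → Bool) : Fin (2 * m) → Bool := fun j =>
  if h : j.val < m then x ⟨m + j.val, by omega⟩
  else x ⟨j.val - m, by have := j.isLt; omega⟩

/-!
Swapping the halves of every sample maps the uniform product measure to itself and, as long as
no sample is a tie `LEFT = RIGHT`, flips every label of the dataset labelled by `h≥`. By the
symmetry of the learner, the outputs on the two datasets then take complementary values at the
all-zero input, which is fixed by the swap, so the learner can succeed on at most one of them.
Hence `2 P(fail) ≥ P(no tie) ≥ 1 - n 2^(-m) ≥ 1/2`, by the union bound and the fact that a tie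
is determined by its left half.
-/

theorem injective_sum_ite_two_pow (k : ℕ) :
    Function.Injective fun b : Fin k → Bool => ∑ i, if b i then 2 ^ (i : ℕ) else 0 := by
  have hsum (b : Fin k → Bool) : (∑ i, if b i then 2 ^ (i : ℕ) else 0) =
      (finFunctionFinEquiv (finTwoEquiv.symm ∘ b) : ℕ) := by
    rw [finFunctionFinEquiv_apply]
    refine Finset.sum_congr rfl fun i _ => ?_
    cases hbi : b i <;> simp [finTwoEquiv, hbi]
  intro b c hbc
  have h := finFunctionFinEquiv.injective <| Fin.val_injective <|
    (hsum b).symm.trans (hbc.trans (hsum c))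
  exact finTwoEquiv.symm.injective.comp_left h

section Halves

variable {m : ℕ}

def leftHalf (x : Fin (2 * m) → Bool) (i : Fin m) : Bool := x ⟨i, by omega⟩

def rightHalf (x : Fin (2 * m) → Bool) (i : Fin m) : Bool := x ⟨m + i, by omega⟩

theorem LEFT_eq_sum_leftHalf (x : Fin (2 * m) → Bool) :
    LEFT m x = ∑ i, if leftHalf x i then 2 ^ (i : ℕ) else 0 := rfl

theorem RIGHT_eq_sum_rightHalf (x : Fin (2 * m) → Bool) :
    RIGHT m x = ∑ i, if rightHalf x i then 2 ^ (i : ℕ) else 0 := rfl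

theorem eq_of_halves_eq {x y : Fin (2 * m) → Bool} (hl : leftHalf x = leftHalf y)
    (hr : rightHalf x = rightHalf y) : x = y := by
  funext j
  rcases lt_or_ge (j : ℕ) m with hj | hj
  · simpa [leftHalf] using congrFun hl ⟨j, hj⟩
  · simpa [rightHalf, Nat.add_sub_cancel' hj] using congrFun hr ⟨j - m, by omega⟩

theorem card_LEFT_eq_RIGHT_le :
    Fintype.card {x : Fin (2 * m) → Bool // LEFT m x = RIGHT m x} ≤ 2 ^ m := by
  have hinj : Function.Injective
      fun x : {x : Fin (2 * m) → Bool // LEFT m x = RIGHT m x} => leftHalf x.1 := by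
    rintro ⟨x, hx⟩ ⟨y, hy⟩ (hl : leftHalf x = leftHalf y)
    have hr : rightHalf x = rightHalf y := injective_sum_ite_two_pow m <| by
      simp only [← RIGHT_eq_sum_rightHalf, ← hx, ← hy, LEFT_eq_sum_leftHalf, hl]
    exact Subtype.ext (eq_of_halves_eq hl hr)
  simpa using Fintype.card_le_of_injective _ hinj

theorem swapHalves_involutive : Function.Involutive (swapHalves m) := by
  intro x
  funext j
  by_cases hj : (j : ℕ) < m
  · simp [swapHalves, hj]
  · have hj' : (j : ℕ) - m < m := by omega
    simp [swapHalves, hj, hj', Nat.add_sub_cancel' (not_lt.mp hj)]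

theorem LEFT_swapHalves (x : Fin (2 * m) → Bool) : LEFT m (swapHalves m x) = RIGHT m x := by
  simp [LEFT, RIGHT, swapHalves]

theorem RIGHT_swapHalves (x : Fin (2 * m) → Bool) : RIGHT m (swapHalves m x) = LEFT m x := by
  simp [LEFT, RIGHT, swapHalves]

theorem hGe_swapHalves {x : Fin (2 * m) → Bool} (h : LEFT m x ≠ RIGHT m x) :
    hGe m (swapHalves m x) = !hGe m x := by
  rcases h.lt_or_gt with h | h <;> simp [hGe, LEFT_swapHalves, RIGHT_swapHalves, h, h.le]

theorem swapHalves_const (b : Bool) : swapHalves m (fun _ => b) = fun _ => b := by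
  funext j
  unfold swapHalves
  split_ifs <;> rfl

end Halves

theorem PMF.measurePreserving_uniformOfFintype {α : Type*} [Fintype α] [Nonempty α]
    [MeasurableSpace α] [MeasurableSingletonClass α] (e : α ≃ α) :
    MeasurePreserving e (PMF.uniformOfFintype α).toMeasure (PMF.uniformOfFintype α).toMeasure := by
  classical
  refine ⟨measurable_of_countable e, ?_⟩
  ext s hs
  rw [Measure.map_apply (measurable_of_countable e) hs,
    PMF.toMeasure_uniformOfFintype_apply _ (measurable_of_countable e hs),
    PMF.toMeasure_uniformOfFintype_apply _ hs]
  congr 2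
  exact Fintype.card_congr (e.subtypeEquiv fun _ => Iff.rfl)

theorem uniform_LEFT_eq_RIGHT_le (m : ℕ) :
    (PMF.uniformOfFintype (Fin (2 * m) → Bool)).toMeasure {x | LEFT m x = RIGHT m x} ≤
      (2 ^ m)⁻¹ := by
  classical
  rw [PMF.toMeasure_uniformOfFintype_apply _ (Set.toFinite _).measurableSet]
  have hcard : Fintype.card (Fin (2 * m) → Bool) = 2 ^ m * 2 ^ m := by simp [two_mul, pow_add]
  calc _ ≤ ((2 ^ m : ℕ) : ℝ≥0∞) / ((2 ^ m * 2 ^ m : ℕ) : ℝ≥0∞) := by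
        rw [hcard]
        gcongr
        exact card_LEFT_eq_RIGHT_le
    _ = (2 ^ m)⁻¹ := by
        push_cast
        rw [ENNReal.div_eq_inv_mul, ENNReal.mul_inv (by simp) (by simp), mul_assoc,
          ENNReal.inv_mul_cancel (by simp) (by simp), mul_one]

theorem pi_uniform_exists_LEFT_eq_RIGHT_le {m n : ℕ} (hm : 1 ≤ m) (hn : n ≤ 2 ^ (m - 1)) :
    Measure.pi (fun _ : Fin n => (PMF.uniformOfFintype (Fin (2 * m) → Bool)).toMeasure)
      {ω | ∃ i, LEFT m (ω i) = RIGHT m (ω i)} ≤ 2⁻¹ := by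
  set ρ := (PMF.uniformOfFintype (Fin (2 * m) → Bool)).toMeasure
  have htie : MeasurableSet {x : Fin (2 * m) → Bool | LEFT m x = RIGHT m x} :=
    (Set.toFinite _).measurableSet
  calc _ = Measure.pi (fun _ : Fin n => ρ)
          (⋃ i, Function.eval i ⁻¹' {x | LEFT m x = RIGHT m x}) := by
        congr 1; ext ω; simp
    _ ≤ ∑ i : Fin n, Measure.pi (fun _ : Fin n => ρ)
          (Function.eval i ⁻¹' {x | LEFT m x = RIGHT m x}) := measure_iUnion_fintype_le _ _
    _ = n * ρ {x | LEFT m x = RIGHT m x} := by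
        simp only [(measurePreserving_eval (fun _ : Fin n => ρ) _).measure_preimage
          htie.nullMeasurableSet, Finset.sum_const, Finset.card_univ, Fintype.card_fin,
          nsmul_eq_mul]
    _ ≤ n * (2 ^ m)⁻¹ := by gcongr; exact uniform_LEFT_eq_RIGHT_le m
    _ ≤ 2⁻¹ := by
        rw [← div_eq_mul_inv]
        refine ENNReal.div_le_of_le_mul ?_
        have h2m : (2 : ℝ≥0∞) ^ m = 2 * 2 ^ (m - 1) := by rw [← pow_succ']; congr 1; omega
        rw [h2m, ENNReal.inv_mul_cancel_left (by simp) (by simp)]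
        exact_mod_cast hn

theorem learner_ne_or_ne_of_symmetric {X : Type*} {n : ℕ} (σ : X → X) (f : X → Bool)
    (A : (Fin n → X × Bool) → X → Bool)
    (hA : ∀ D x, A (fun i => (σ (D i).1, !(D i).2)) x = !A D (σ x))
    {x₀ : X} (hx₀ : σ x₀ = x₀) {ω : Fin n → X} (hω : ∀ i, f (σ (ω i)) = !f (ω i)) :
    A (fun i => (ω i, f (ω i))) ≠ f ∨ A (fun i => (σ (ω i), f (σ (ω i)))) ≠ f := by
  by_contra! h
  obtain ⟨h₁, h₂⟩ := h
  -- the symmetry, evaluated at the `σ`-fixed point `x₀`, forces `f x₀ = !f x₀`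
  have key := hA (fun i => (ω i, f (ω i))) x₀
  simp only [← hω, h₂, hx₀, h₁] at key
  exact Bool.eq_not_self _ |>.mp key

theorem MeasureTheory.MeasurePreserving.one_div_four_le_of_forall_mem {α : Type*}
    [MeasurableSpace α] {μ : Measure α} [IsProbabilityMeasure μ] {T : α → α}
    (hT : MeasurePreserving T μ μ) {B F : Set α} (hF : NullMeasurableSet F μ) (hB : μ B ≤ 2⁻¹)
    (hcover : ∀ ω, ω ∈ B ∨ ω ∈ F ∨ T ω ∈ F) : 1 / 4 ≤ μ F := by
  have hsub : Set.univ ⊆ B ∪ F ∪ T ⁻¹' F := fun ω _ => by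
    rcases hcover ω with h | h | h
    exacts [Or.inl (Or.inl h), Or.inl (Or.inr h), Or.inr h]
  have hhalf : 2⁻¹ ≤ 2 * μ F := by
    rw [← ENNReal.one_sub_inv_two, tsub_le_iff_left]
    calc 1 = μ Set.univ := measure_univ.symm
      _ ≤ μ (B ∪ F) + μ (T ⁻¹' F) := (measure_mono hsub).trans (measure_union_le _ _)
      _ ≤ μ B + μ F + μ F := by
          rw [hT.measure_preimage hF]
          gcongr
          exact measure_union_le _ _
      _ ≤ 2⁻¹ + 2 * μ F := by
          rw [add_assoc, ← two_mul]
          gcongr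
  calc (1 / 4 : ℝ≥0∞) = 2⁻¹ / 2 := by
        rw [ENNReal.div_eq_inv_mul, ENNReal.div_eq_inv_mul,
          ← ENNReal.mul_inv (by simp) (by simp)]
        norm_num
    _ ≤ μ F := ENNReal.div_le_of_le_mul' hhalf

/-- A learner with variable-and-label symmetry with respect to the half-swap `σ` (i.e.
`A((σx_1, 1-y_1),…,(σx_n, 1-y_n))(x) = 1 - A((x_1,y_1),…,(x_n,y_n))(σx)`), when trained on
`n ≤ 2^(m-1)` i.i.d. uniform examples labeled by `h≥`, fails to identify `h≥` with probability
at least `1/4`. -/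
theorem symmetric_learner_fails_hGe
    (m : ℕ) (hm : 1 ≤ m)
    (n : ℕ) (hn : n ≤ 2 ^ (m - 1))
    (A : (Fin n → (Fin (2 * m) → Bool) × Bool) → ((Fin (2 * m) → Bool) → Bool))
    (hsym : ∀ (D : Fin n → (Fin (2 * m) → Bool) × Bool) (x : Fin (2 * m) → Bool),
      A (fun i => (swapHalves m (D i).1, !(D i).2)) x = !(A D (swapHalves m x))) :
    let ρ : Measure (Fin (2 * m) → Bool) :=
      (PMF.uniformOfFintype (Fin (2 * m) → Bool)).toMeasure
    (Measure.pi fun _ : Fin n => ρ)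
        {ω | A (fun i => (ω i, hGe m (ω i))) ≠ hGe m} ≥ 1 / 4 := by
  intro ρ
  have hT : MeasurePreserving (fun ω i => swapHalves m (ω i)) (Measure.pi fun _ : Fin n => ρ)
      (Measure.pi fun _ : Fin n => ρ) := measurePreserving_pi _ _ fun _ =>
    PMF.measurePreserving_uniformOfFintype (swapHalves_involutive.toPerm _)
  refine hT.one_div_four_le_of_forall_mem (Set.toFinite _).measurableSet.nullMeasurableSet
    (pi_uniform_exists_LEFT_eq_RIGHT_le hm hn) fun ω => ?_
  by_cases htie : ∃ i, LEFT m (ω i) = RIGHT m (ω i)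
  · exact Or.inl htie
  · simp only [not_exists] at htie
    exact Or.inr <| learner_ne_or_ne_of_symmetric (swapHalves m) (hGe m) A hsym
      (swapHalves_const false) fun i => hGe_swapHalves (htie i)
end

section
/- (Existence of a small teaching set for the maximum-margin classifier.) Let X ⊂ ℝ^d be finite and let f : X → {−1,1} be such that P(X) is nonempty, where for D ⊆ X one sets D^δ = {x − x' : x, x' ∈ D, f(x) = 1, f(x') = −1} and P(D) = {w ∈ ℝ^d : ⟨δ, w⟩ ≥ 2 for all δ ∈ D^δ}, and w*(D) denotes the minimum-Euclidean-norm element of P(D). Then there exists a subset D ⊆ X with |D| ≤ 2d + 2 such that w*(D) = w*(X). -/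
open RealInnerProductSpace

/-- The polyhedron `P(D) = {w : ⟨x - x', w⟩ ≥ 2 for all x, x' ∈ D with f(x) = 1, f(x') = -1}`
determined by the labeled points of `D`. -/
def marginPolyhedron {d : ℕ} (f : EuclideanSpace ℝ (Fin d) → ℝ)
    (D : Finset (EuclideanSpace ℝ (Fin d))) : Set (EuclideanSpace ℝ (Fin d)) :=
  {w | ∀ x ∈ D, ∀ x' ∈ D, f x = 1 → f x' = -1 → 2 ≤ ⟪x - x', w⟫}

/-!
Let `w = w*(X)`. No `u ∈ P(X)` is shorter than `w`, i.e. the convex sets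
`{u : ⟪x - x', u⟫ ≥ 2} ∩ {u : ‖u‖ < ‖w‖}`, one for each constraint of `P(X)`, have empty
intersection. By Helly's theorem in `ℝ^d` some `d + 1` of them already do, so `w` is also a
minimum-norm point of the polyhedron cut out by those `d + 1` constraints. Their endpoints form a
set `D` of at most `2d + 2` points with `w ∈ P(X) ⊆ P(D)` and `P(D)` contained in that polyhedron,
so `w = w*(D)` by uniqueness of the minimum-norm point of a convex set.
-/

open Module Finset

lemma exists_subset_card_le_isMinOn_biInter {ι E : Type*} [AddCommGroup E] [Module ℝ E]
    [FiniteDimensional ℝ E] {C : ι → Set E} {s : Finset ι} (hC : ∀ i ∈ s, Convex ℝ (C i))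
    {g : E → ℝ} (hg : ConvexOn ℝ Set.univ g) {w : E} (hmin : IsMinOn g (⋂ i ∈ s, C i) w) :
    ∃ t ⊆ s, #t ≤ finrank ℝ E + 1 ∧ IsMinOn g (⋂ i ∈ t, C i) w := by
  rcases s.eq_empty_or_nonempty with rfl | ⟨i₀, hi₀⟩
  · exact ⟨∅, subset_refl _, by simp, hmin⟩
  by_contra! h
  obtain ⟨u, hu⟩ := Convex.helly_theorem' (𝕜 := ℝ) (s := s) (F := fun i ↦ C i ∩ {u | g u < g w})
    (fun i hi ↦ (hC i hi).inter (by simpa using hg.convex_lt (g w)))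
    (fun t hts hcard ↦ by
      obtain ⟨u, hu, hlt⟩ : ∃ u ∈ ⋂ i ∈ t, C i, g u < g w := by
        simpa [isMinOn_iff] using h t hts hcard
      exact ⟨u, Set.mem_iInter₂.2 fun i hi ↦ ⟨Set.mem_iInter₂.1 hu i hi, hlt⟩⟩)
  rw [Set.mem_iInter₂] at hu
  exact (isMinOn_iff.1 hmin u (Set.mem_iInter₂.2 fun i hi ↦ (hu i hi).1)).not_gt (hu i₀ hi₀).2

lemma IsClosed.exists_isMinOn_norm {E : Type*} [NormedAddCommGroup E] [ProperSpace E] {K : Set E}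
    (hK : IsClosed K) (hne : K.Nonempty) : ∃ w ∈ K, IsMinOn norm K w := by
  obtain ⟨w, hw, hdist⟩ := hK.exists_infDist_eq_dist hne 0
  exact ⟨w, hw, fun u hu ↦ by simpa [hdist] using Metric.infDist_le_dist_of_mem hu (x := 0)⟩

lemma Convex.eq_of_isMinOn_norm {E : Type*} [NormedAddCommGroup E] [NormedSpace ℝ E]
    [StrictConvexSpace ℝ E] {K : Set E} (hK : Convex ℝ K) {x y : E}
    (hx : x ∈ K) (hy : y ∈ K) (hmx : IsMinOn norm K x) (hmy : IsMinOn norm K y) : x = y := by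
  have hxy : ‖x‖ = ‖y‖ := le_antisymm (isMinOn_iff.1 hmx y hy) (isMinOn_iff.1 hmy x hx)
  by_contra hne
  have hmid : (1 / 2 : ℝ) • (x + y) ∈ K := by
    simpa [smul_add] using hK hx hy (by norm_num : (0 : ℝ) ≤ 1 / 2) (by norm_num) (by norm_num)
  exact (isMinOn_iff.1 hmx _ hmid).not_gt ((norm_midpoint_lt_iff hxy).2 hne)

section LabeledPairs

variable {α : Type*} (f : α → ℝ)

/-- The pairs `(x, x')` indexing the paper's `D^δ`; keeping pairs instead of the differences
`x - x'` is what lets a set of constraints be turned back into a set of points. -/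
noncomputable def labeledPairs (D : Finset α) : Finset (α × α) :=
  (D ×ˢ D).filter fun p ↦ f p.1 = 1 ∧ f p.2 = -1

variable {f} [DecidableEq α] {t : Finset (α × α)} {X : Finset α}

lemma image_fst_union_image_snd_subset (h : t ⊆ labeledPairs f X) :
    t.image Prod.fst ∪ t.image Prod.snd ⊆ X := by
  intro x hx
  simp only [mem_union, mem_image] at hx
  rcases hx with ⟨p, hp, rfl⟩ | ⟨p, hp, rfl⟩
  · exact (mem_product.1 (mem_filter.1 (h hp)).1).1
  · exact (mem_product.1 (mem_filter.1 (h hp)).1).2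

lemma subset_labeledPairs_image_fst_union_image_snd (h : t ⊆ labeledPairs f X) :
    t ⊆ labeledPairs f (t.image Prod.fst ∪ t.image Prod.snd) := fun _ hp ↦
  mem_filter.2 ⟨mem_product.2 ⟨mem_union_left _ (mem_image_of_mem _ hp),
    mem_union_right _ (mem_image_of_mem _ hp)⟩, (mem_filter.1 (h hp)).2⟩

lemma card_image_fst_union_image_snd_le (t : Finset (α × α)) :
    (t.image Prod.fst ∪ t.image Prod.snd).card ≤ 2 * #t :=
  (card_union_le _ _).trans (by rw [two_mul]; exact add_le_add card_image_le card_image_le)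

end LabeledPairs

section MarginPolyhedron

variable {d : ℕ} (f : EuclideanSpace ℝ (Fin d) → ℝ)

lemma marginPolyhedron_eq_biInter (D : Finset (EuclideanSpace ℝ (Fin d))) :
    marginPolyhedron f D = ⋂ p ∈ labeledPairs f D, {w | 2 ≤ ⟪p.1 - p.2, w⟫} := by
  ext w
  simp only [marginPolyhedron, labeledPairs, Set.mem_iInter, mem_filter, mem_product,
    Set.mem_ofPred_eq, and_imp, Prod.forall]
  exact ⟨fun h x x' hx hx' ↦ h x hx x' hx', fun h x hx x' hx' ↦ h x x' hx hx'⟩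

lemma convex_marginPolyhedron (D : Finset (EuclideanSpace ℝ (Fin d))) :
    Convex ℝ (marginPolyhedron f D) := by
  rw [marginPolyhedron_eq_biInter]
  exact convex_iInter₂ fun p _ ↦ convex_halfSpace_ge (innerSL ℝ (p.1 - p.2)).isLinear 2

lemma isClosed_marginPolyhedron (D : Finset (EuclideanSpace ℝ (Fin d))) :
    IsClosed (marginPolyhedron f D) := by
  rw [marginPolyhedron_eq_biInter]
  exact isClosed_biInter fun p _ ↦ isClosed_le continuous_const
    (continuous_const.inner continuous_id)

lemma marginPolyhedron_anti {D X : Finset (EuclideanSpace ℝ (Fin d))} (h : D ⊆ X) :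
    marginPolyhedron f X ⊆ marginPolyhedron f D :=
  fun _ hw x hx x' hx' ↦ hw x (h hx) x' (h hx')

end MarginPolyhedron

theorem exists_small_teaching_set_general
    (d : ℕ) (X : Finset (EuclideanSpace ℝ (Fin d)))
    (f : EuclideanSpace ℝ (Fin d) → ℝ)
    (hne : (marginPolyhedron f X).Nonempty) :
    ∃ D ⊆ X, D.card ≤ 2 * d + 2 ∧
      ∀ wD wX : EuclideanSpace ℝ (Fin d),
        (wD ∈ marginPolyhedron f D ∧ ∀ u ∈ marginPolyhedron f D, ‖wD‖ ≤ ‖u‖) →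
        (wX ∈ marginPolyhedron f X ∧ ∀ u ∈ marginPolyhedron f X, ‖wX‖ ≤ ‖u‖) →
        wD = wX := by
  classical
  obtain ⟨w, hw, hw_min⟩ := (isClosed_marginPolyhedron f X).exists_isMinOn_norm hne
  obtain ⟨t, htX, hcard, ht_min⟩ := exists_subset_card_le_isMinOn_biInter
    (fun p _ ↦ convex_halfSpace_ge (innerSL ℝ (p.1 - p.2)).isLinear 2) (convexOn_norm convex_univ)
    (marginPolyhedron_eq_biInter f X ▸ hw_min)
  rw [finrank_euclideanSpace_fin] at hcard
  set D := t.image Prod.fst ∪ t.image Prod.snd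
  have hDX : D ⊆ X := image_fst_union_image_snd_subset htX
  have hw_minD : IsMinOn norm (marginPolyhedron f D) w := by
    rw [marginPolyhedron_eq_biInter]
    exact ht_min.on_subset
      (Set.biInter_subset_biInter_left (subset_labeledPairs_image_fst_union_image_snd htX))
  refine ⟨D, hDX, by linarith [card_image_fst_union_image_snd_le t], ?_⟩
  rintro wD wX ⟨hwD, hwD_min⟩ ⟨hwX, hwX_min⟩
  rw [(convex_marginPolyhedron f D).eq_of_isMinOn_norm hwD (marginPolyhedron_anti f hDX hw)
      (isMinOn_iff.2 hwD_min) hw_minD,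
    (convex_marginPolyhedron f X).eq_of_isMinOn_norm hwX hw (isMinOn_iff.2 hwX_min) hw_min]

/-- Existence of a small teaching set for the maximum-margin classifier: for a finite
`X ⊂ ℝ^d` labeled by `f : X → {-1,1}` with `P(X)` nonempty, there is a subset `D ⊆ X` with
`|D| ≤ 2d + 2` whose maximum-margin (minimum-norm) solution coincides with that of `X`. -/
theorem exists_small_teaching_set
    (d : ℕ) (X : Finset (EuclideanSpace ℝ (Fin d)))
    (f : EuclideanSpace ℝ (Fin d) → ℝ)
    (hf : ∀ x ∈ X, f x = 1 ∨ f x = -1)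
    (hne : (marginPolyhedron f X).Nonempty) :
    ∃ D ⊆ X, D.card ≤ 2 * d + 2 ∧
      ∀ wD wX : EuclideanSpace ℝ (Fin d),
        (wD ∈ marginPolyhedron f D ∧ ∀ u ∈ marginPolyhedron f D, ‖wD‖ ≤ ‖u‖) →
        (wX ∈ marginPolyhedron f X ∧ ∀ u ∈ marginPolyhedron f X, ‖wX‖ ≤ ‖u‖) →
        wD = wX :=
  exists_small_teaching_set_general d X f hne
end
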